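/- In the π-calculus with mixed choice, the term S = (ā + b.S1) | (b̄ + c.S2) | (c̄ + d.S3) | (d̄ + e.S4) | (ē + a.S5), for any S1,...,S5 ∈ {0, ✓}, is a non-local M*: it has five alternative communication steps (one per channel a,...,e) forming a conflict cycle of length five in which adjacent steps are in (symmetric) conflict and all non-adjacent pairs are distributable. -/
import Mathlib


/- STATEMENT 8: In the π-calculus with mixed choice, the term
S = (ā+b.S1) | (b̄+c.S2) | (c̄+d.S3) | (d̄+e.S4) | (ē+a.S5), S1,...,S5 ∈ {0,✓},
is a non-local M*: five alternative communication steps (one per channel)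
forming a conflict cycle of length five; adjacent steps are in (symmetric)
conflict and all non-adjacent pairs are distributable. -/
set_option autoImplicit true

/-- Syntax of the π-calculus with mixed choice (binary guarded sums),
including the success constant ✓. -/
inductive Pi : Type
  | nil : Pi
  | succ : Pi                     -- the success constant ✓
  | par : Pi → Pi → Pi
  | res : Nat → Pi → Pi
  | repl : Pi → Pi
  | sum : Pi → Pi → Pi            -- choice between guarded branches
  | inp : Nat → Nat → Pi → Pi     -- y(x).P
  | outp : Nat → Nat → Pi → Pi    -- ȳ⟨z⟩.P
  | tau : Pi → Pi                 -- τ.P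
deriving DecidableEq

namespace Pi

/-- Capture-avoiding-on-binders substitution P{z/x}. -/
def subst (x z : Nat) : Pi → Pi
  | nil => nil
  | succ => succ
  | par P Q => par (subst x z P) (subst x z Q)
  | res n P => if n = x then res n P else res n (subst x z P)
  | repl P => repl (subst x z P)
  | sum P Q => sum (subst x z P) (subst x z Q)
  | inp y w P =>
      inp (if y = x then z else y) w (if w = x then P else subst x z P)
  | outp y w P => outp (if y = x then z else y) (if w = x then z else w) (subst x z P)
  | tau P => tau (subst x z P)

/-- Free names. -/
def fn : Pi → Set Nat
  | nil => ∅
  | succ => ∅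
  | par P Q => fn P ∪ fn Q
  | res n P => fn P \ {n}
  | repl P => fn P
  | sum P Q => fn P ∪ fn Q
  | inp y w P => insert y (fn P \ {w})
  | outp y w P => insert y (insert w (fn P))
  | tau P => fn P

/-- Structural congruence. -/
inductive SC : Pi → Pi → Prop
  | refl (P) : SC P P
  | symm : SC P Q → SC Q P
  | trans : SC P Q → SC Q R → SC P R
  | parNil (P) : SC (par P nil) P
  | parComm (P Q) : SC (par P Q) (par Q P)
  | parAssoc (P Q R) : SC (par (par P Q) R) (par P (par Q R))
  | replUnfold (P) : SC (repl P) (par P (repl P))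
  | resNil (n) : SC (res n nil) nil
  | resSwap (n m P) : SC (res n (res m P)) (res m (res n P))
  | resPar (n P Q) : n ∉ fn P → SC (par P (res n Q)) (res n (par P Q))
  | parCongr : SC P P' → SC Q Q' → SC (par P Q) (par P' Q')
  | resCongr (n) : SC P P' → SC (res n P) (res n P')
  | replCongr : SC P P' → SC (repl P) (repl P')

/-- Branch selection from a guarded choice. -/
inductive Sel : Pi → Pi → Prop
  | refl (P) : Sel P P
  | left : Sel P B → Sel (sum P Q) B
  | right : Sel Q B → Sel (sum P Q) B

/-- Reduction semantics: communication consumes the two choices containing the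
matching input and output prefixes. -/
inductive Red : Pi → Pi → Prop
  | comm : Sel M (inp y x P) → Sel N (outp y z Q) →
      Red (par M N) (par (subst x z P) Q)
  | tauStep : Sel M (tau P) → Red M P
  | parCtx : Red P P' → Red (par P Q) (par P' Q)
  | resCtx (n) : Red P P' → Red (res n P) (res n P')
  | structCong : SC P Q → Red Q Q' → SC Q' P' → Red P P'

def Steps : Pi → Pi → Prop := Relation.ReflTransGen Red

/-- Two alternative steps (given by their results) can be completed to a common
term: the behavioural rendering of "parallel steps". -/
def ParallelSteps (X Y : Pi) : Prop := ∃ Q, Red X Q ∧ Red Y Q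

/-- Behavioural rendering of a (symmetric) conflict: neither step can be
completed after the other. -/
def InConflict (X Y : Pi) : Prop := ¬ ParallelSteps X Y

/-- The two steps `P ⟶ X` and `P ⟶ Y` are distributable: they can be performed
by two separate parallel components of (a term structurally congruent to) `P`. -/
def DistributableSteps (P X Y : Pi) : Prop :=
  ∃ Q1 Q2 Q1' Q2', SC P (par Q1 Q2) ∧ Red Q1 Q1' ∧ Red Q2 Q2' ∧
    SC X (par Q1' Q2) ∧ SC Y (par Q1 Q2')

end Pi

namespace Pi

/-- indicator function of a term -/
def sing (X : Pi) : Pi → ℕ∞ := fun C => if C = X then 1 else 0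

lemma sing_self (X : Pi) : sing X X = 1 := by simp [sing]

lemma sing_ne {X C : Pi} (h : C ≠ X) : sing X C = 0 := by simp [sing, h]

lemma sing_ne_top (X C : Pi) : sing X C ≠ ⊤ := by
  unfold sing; split <;> simp

/-- multiplicity of each parallel component (ignoring restrictions, with
replication contributing 0 or ∞). -/
noncomputable def F : Pi → Pi → ℕ∞
  | nil => 0
  | succ => sing succ
  | par P Q => F P + F Q
  | res _ P => F P
  | repl P => fun C => if F P C = 0 then 0 else ⊤
  | sum A B => sing (sum A B)
  | inp y w P => sing (inp y w P)
  | outp y z P => sing (outp y z P)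
  | tau P => sing (tau P)

lemma F_SC {P Q : Pi} (h : SC P Q) : F P = F Q := by
  induction h with
  | refl => rfl
  | symm _ ih => exact ih.symm
  | trans _ _ ih1 ih2 => exact ih1.trans ih2
  | parNil P => show F P + F nil = F P; simp [F]
  | parComm P Q => exact add_comm (F P) (F Q)
  | parAssoc P Q R => exact add_assoc (F P) (F Q) (F R)
  | replUnfold P =>
      funext C
      show (if F P C = 0 then 0 else ⊤) = F P C + (if F P C = 0 then 0 else ⊤)
      split
      · simp [*]
      · simp
  | resNil n => rfl
  | resSwap n m P => rfl
  | resPar n P Q h => rfl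
  | parCongr _ _ ih1 ih2 => show F _ + F _ = F _ + F _; rw [ih1, ih2]
  | resCongr n _ ih => exact ih
  | replCongr _ ih => funext C; simp only [F]; rw [ih]

lemma F_sel_inp {M : Pi} {y x : Nat} {P : Pi} (h : Sel M (inp y x P)) : F M = sing M := by
  cases h <;> rfl

lemma F_sel_outp {M : Pi} {y z : Nat} {P : Pi} (h : Sel M (outp y z P)) : F M = sing M := by
  cases h <;> rfl

lemma F_sel_tau {M : Pi} {P : Pi} (h : Sel M (tau P)) : F M = sing M := by
  cases h <;> rfl

/-- characterization of one reduction step in terms of `F`. -/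
lemma red_F {P Q : Pi} (h : Red P Q) :
    (∃ M N y x Pc z Qc R, Sel M (inp y x Pc) ∧ Sel N (outp y z Qc) ∧
      F P = sing M + sing N + R ∧ F Q = F (subst x z Pc) + F Qc + R) ∨
    (∃ M Pc R, Sel M (tau Pc) ∧ F P = sing M + R ∧ F Q = F Pc + R) := by
  induction h with
  | @comm M y x Pc N z Qc hin hout =>
      left
      refine ⟨M, N, y, x, Pc, z, Qc, 0, hin, hout, ?_, ?_⟩
      · show F M + F N = _
        rw [F_sel_inp hin, F_sel_outp hout, add_zero]
      · show F _ + F _ = _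
        rw [add_zero]
  | @tauStep M Pc hsel =>
      right
      exact ⟨M, Pc, 0, hsel, by rw [F_sel_tau hsel, add_zero], (add_zero _).symm⟩
  | @parCtx P₁ P₁' Q₁ _ ih =>
      rcases ih with ⟨M, N, y, x, Pc, z, Qc, R, h1, h2, h3, h4⟩ | ⟨M, Pc, R, h1, h2, h3⟩
      · left
        refine ⟨M, N, y, x, Pc, z, Qc, R + F Q₁, h1, h2, ?_, ?_⟩
        · show F P₁ + F Q₁ = _; rw [h3]; ring
        · show F _ + F Q₁ = _; rw [h4]; ring
      · right
        refine ⟨M, Pc, R + F Q₁, h1, ?_, ?_⟩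
        · show F P₁ + F Q₁ = _; rw [h2]; ring
        · show F _ + F Q₁ = _; rw [h3]; ring
  | @resCtx P₁ P₁' n _ ih => exact ih
  | @structCong P₁ Q₁ Q₁' P₁' hsc1 _ hsc2 ih =>
      rw [show F P₁ = F Q₁ from F_SC hsc1, show F P₁' = F Q₁' from (F_SC hsc2).symm]
      exact ih

/-- a guarded choice of the cyclic shape used below -/
def mkC (x0 p q : Nat) (K : Pi) : Pi := .sum (.outp p p .nil) (.inp q x0 K)

lemma small_F {T : Pi} (hT : T = nil ∨ T = succ) {X : Pi} (hX : X ≠ succ) : F T X = 0 := by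
  rcases hT with rfl | rfl
  · rfl
  · exact sing_ne hX

lemma subst_small {T : Pi} (hT : T = nil ∨ T = succ) (x z : Nat) : subst x z T = T := by
  rcases hT with rfl | rfl <;> rfl

lemma not_sel_succ_inp {y x : Nat} {P : Pi} : ¬ Sel succ (inp y x P) := fun h => by cases h

lemma not_sel_succ_outp {y z : Nat} {P : Pi} : ¬ Sel succ (outp y z P) := fun h => by cases h

lemma not_sel_succ_tau {P : Pi} : ¬ Sel succ (tau P) := fun h => by cases h

lemma not_sel_mk_tau {x0 u v : Nat} {K Pc : Pi} : ¬ Sel (mkC x0 u v K) (tau Pc) := by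
  intro h
  cases h with
  | left h' => cases h'
  | right h' => cases h'

lemma sel_mk_inp {x0 u v : Nat} {K : Pi} {y x : Nat} {Pc : Pi}
    (h : Sel (mkC x0 u v K) (inp y x Pc)) : v = y ∧ x0 = x ∧ K = Pc := by
  cases h with
  | left h' => cases h'
  | right h' => cases h'; exact ⟨rfl, rfl, rfl⟩

lemma sel_mk_outp {x0 u v : Nat} {K : Pi} {y z : Nat} {Qc : Pi}
    (h : Sel (mkC x0 u v K) (outp y z Qc)) : u = y ∧ u = z ∧ nil = Qc := by
  cases h with
  | left h' => cases h'; exact ⟨rfl, rfl, rfl⟩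
  | right h' => cases h'

lemma locate {D1 D2 D3 E M : Pi} (hE : E = nil ∨ E = succ)
    (h1 : (1 : ℕ∞) ≤ sing D1 M + sing D2 M + sing D3 M + F E M) :
    M = D1 ∨ M = D2 ∨ M = D3 ∨ M = succ := by
  by_contra hc
  push_neg at hc
  obtain ⟨h1', h2', h3', h4'⟩ := hc
  rw [sing_ne h1', sing_ne h2', sing_ne h3', small_F hE h4'] at h1
  simp at h1

end Pi
namespace Pi

lemma two_sing_ne_top (A B X : Pi) : sing A X + sing B X ≠ ⊤ := by
  intro h
  rcases WithTop.add_eq_top.1 h with h' | h'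
  · exact sing_ne_top _ _ h'
  · exact sing_ne_top _ _ h'

/-- Key analysis lemma: if `P` consists (as measured by `F`) of the three
chained choices `D1 = p̄+q.K1`, `D2 = q̄+r.K2`, `D3 = r̄+s.K3` together with a
trivial extra component `E`, then any one-step reduct `Q` of `P` consists of
exactly `D3` (comm on `q`) or exactly `D1` (comm on `r`), apart from trivial
components. -/
lemma key {x0 p q r s : Nat} {K1 K2 K3 E P Q : Pi}
    (hK1 : K1 = nil ∨ K1 = succ) (hK2 : K2 = nil ∨ K2 = succ)
    (hK3 : K3 = nil ∨ K3 = succ) (hE : E = nil ∨ E = succ)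
    (hpq : p ≠ q) (hpr : p ≠ r) (hps : p ≠ s)
    (hqr : q ≠ r) (hqs : q ≠ s) (hrs : r ≠ s)
    (hred : Red P Q)
    (hFP : ∀ X, F P X = sing (mkC x0 p q K1) X + sing (mkC x0 q r K2) X
      + sing (mkC x0 r s K3) X + F E X) :
    (∀ X, X ≠ succ → F Q X = sing (mkC x0 r s K3) X) ∨
    (∀ X, X ≠ succ → F Q X = sing (mkC x0 p q K1) X) := by
  rcases red_F hred with ⟨M, N, y, x, Pc, z, Qc, R, hiM, hoN, hP, hQ⟩ |
    ⟨M, Pc, R, htM, hP, hQ⟩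
  · -- communication case
    have hm : M = mkC x0 p q K1 ∨ M = mkC x0 q r K2 ∨ M = mkC x0 r s K3 ∨ M = succ := by
      apply locate hE
      rw [← hFP M, congrFun hP M]
      simp only [Pi.add_apply]
      rw [sing_self]
      calc (1 : ℕ∞) ≤ 1 + sing N M := le_self_add
        _ ≤ 1 + sing N M + R M := le_self_add
    have hn : N = mkC x0 p q K1 ∨ N = mkC x0 q r K2 ∨ N = mkC x0 r s K3 ∨ N = succ := by
      apply locate hE
      rw [← hFP N, congrFun hP N]
      simp only [Pi.add_apply]
      rw [sing_self]
      calc (1 : ℕ∞) ≤ sing M N + 1 := le_add_self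
        _ ≤ sing M N + 1 + R N := le_self_add
    rcases hm with rfl | rfl | rfl | rfl
    · -- M = D1 : input on q
      obtain ⟨hy, hx, hPc⟩ := sel_mk_inp hiM
      rcases hn with rfl | rfl | rfl | rfl
      · obtain ⟨hy', _, _⟩ := sel_mk_outp hoN
        exact absurd (hy'.trans hy.symm) hpq
      · -- N = D2 : output on q ; comm on q, leaves D3
        obtain ⟨hy', hz, hQc⟩ := sel_mk_outp hoN
        left
        intro X hX
        subst hy hx hPc hz hQc
        have hr : sing (mkC x0 p q K1) X + sing (mkC x0 q r K2) X + R X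
            = sing (mkC x0 p q K1) X + sing (mkC x0 q r K2) X + sing (mkC x0 r s K3) X := by
          have h2 := (congrFun hP X).symm.trans (hFP X)
          simp only [Pi.add_apply] at h2
          rw [small_F hE hX, add_zero] at h2
          exact h2
        have hRX : R X = sing (mkC x0 r s K3) X :=
          WithTop.add_left_cancel (two_sing_ne_top _ _ _) hr
        have hq := congrFun hQ X
        simp only [Pi.add_apply] at hq
        rw [subst_small hK1] at hq
        rw [ small_F hK1 hX, show F nil X = 0 from rfl,
          zero_add, zero_add, hRX] at hq
        exact hq
      · obtain ⟨hy', _, _⟩ := sel_mk_outp hoN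
        exact absurd (hy'.trans hy.symm) hqr.symm
      · exact absurd hoN not_sel_succ_outp
    · -- M = D2 : input on r
      obtain ⟨hy, hx, hPc⟩ := sel_mk_inp hiM
      rcases hn with rfl | rfl | rfl | rfl
      · obtain ⟨hy', _, _⟩ := sel_mk_outp hoN
        exact absurd (hy'.trans hy.symm) hpr
      · obtain ⟨hy', _, _⟩ := sel_mk_outp hoN
        exact absurd (hy'.trans hy.symm) hqr
      · -- N = D3 : output on r ; comm on r, leaves D1
        obtain ⟨hy', hz, hQc⟩ := sel_mk_outp hoN
        right
        intro X hX
        subst hy hx hPc hz hQc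
        have hr : sing (mkC x0 q r K2) X + sing (mkC x0 r s K3) X + R X
            = sing (mkC x0 q r K2) X + sing (mkC x0 r s K3) X + sing (mkC x0 p q K1) X := by
          have h2 := (congrFun hP X).symm.trans (hFP X)
          simp only [Pi.add_apply] at h2
          rw [small_F hE hX, add_zero] at h2
          rw [h2]; ring
        have hRX : R X = sing (mkC x0 p q K1) X :=
          WithTop.add_left_cancel (two_sing_ne_top _ _ _) hr
        have hq := congrFun hQ X
        simp only [Pi.add_apply] at hq
        rw [subst_small hK2] at hq
        rw [ small_F hK2 hX, show F nil X = 0 from rfl,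
          zero_add, zero_add, hRX] at hq
        exact hq
      · exact absurd hoN not_sel_succ_outp
    · -- M = D3 : input on s, no matching output
      obtain ⟨hy, hx, hPc⟩ := sel_mk_inp hiM
      rcases hn with rfl | rfl | rfl | rfl
      · obtain ⟨hy', _, _⟩ := sel_mk_outp hoN
        exact absurd (hy'.trans hy.symm) hps
      · obtain ⟨hy', _, _⟩ := sel_mk_outp hoN
        exact absurd (hy'.trans hy.symm) hqs
      · obtain ⟨hy', _, _⟩ := sel_mk_outp hoN
        exact absurd (hy'.trans hy.symm) hrs
      · exact absurd hoN not_sel_succ_outp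
    · exact absurd hiM not_sel_succ_inp
  · -- tau case: impossible
    have hm : M = mkC x0 p q K1 ∨ M = mkC x0 q r K2 ∨ M = mkC x0 r s K3 ∨ M = succ := by
      apply locate hE
      rw [← hFP M, congrFun hP M]
      simp only [Pi.add_apply]
      rw [sing_self]
      exact le_self_add
    rcases hm with rfl | rfl | rfl | rfl
    · exact absurd htM not_sel_mk_tau
    · exact absurd htM not_sel_mk_tau
    · exact absurd htM not_sel_mk_tau
    · exact absurd htM not_sel_succ_tau

/-- derive a contradiction from the two key-lemma conclusions on a common `Q` -/
lemma sing_clash {A B Q : Pi} (hA : A ≠ succ) (hAB : A ≠ B)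
    (h1 : ∀ X, X ≠ succ → F Q X = sing A X)
    (h2 : ∀ X, X ≠ succ → F Q X = sing B X) : False := by
  have e1 := h1 A hA
  have e2 := h2 A hA
  rw [e1, sing_self, sing_ne hAB] at e2
  simp at e2

end Pi
namespace Pi

/-- parallel composition of a list of processes -/
def ofL : List Pi → Pi
  | [] => nil
  | P :: l => par P (ofL l)

lemma sc_perm : ∀ {l l' : List Pi}, l.Perm l' → SC (ofL l) (ofL l') := by
  intro l l' h
  induction h with
  | nil => exact SC.refl _
  | cons a _ ih => exact SC.parCongr (SC.refl a) ih
  | swap a b t =>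
      exact SC.trans (SC.symm (SC.parAssoc b a (ofL t)))
        (SC.trans (SC.parCongr (SC.parComm b a) (SC.refl (ofL t)))
          (SC.parAssoc a b (ofL t)))
  | trans _ _ ih1 ih2 => exact SC.trans ih1 ih2

lemma nest5 (A B C D E : Pi) :
    SC (par A (par B (par C (par D E)))) (ofL [A, B, C, D, E]) :=
  SC.parCongr (SC.refl A) (SC.parCongr (SC.refl B) (SC.parCongr (SC.refl C)
    (SC.parCongr (SC.refl D) (SC.symm (SC.parNil E)))))

lemma sc_append : ∀ (l1 l2 : List Pi), SC (ofL (l1 ++ l2)) (par (ofL l1) (ofL l2))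
  | [], l2 => SC.symm (SC.trans (SC.parComm _ _) (SC.parNil _))
  | a :: l1, l2 =>
      SC.trans (SC.parCongr (SC.refl a) (sc_append l1 l2))
        (SC.symm (SC.parAssoc a (ofL l1) (ofL l2)))

lemma red_head {M N : Pi} {y x : Nat} {P : Pi} {z : Nat} {Q : Pi}
    (hin : Sel M (inp y x P)) (hout : Sel N (outp y z Q)) (l : List Pi) :
    Red (ofL (M :: N :: l)) (ofL (subst x z P :: Q :: l)) :=
  Red.structCong (SC.symm (SC.parAssoc M N (ofL l)))
    (Red.parCtx (Red.comm hin hout)) (SC.parAssoc _ _ (ofL l))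

lemma red_head' {M N : Pi} {y x : Nat} {P : Pi} {z : Nat} {Q : Pi}
    (hsm : P = nil ∨ P = succ)
    (hin : Sel M (inp y x P)) (hout : Sel N (outp y z Q)) (l : List Pi) :
    Red (ofL (M :: N :: l)) (ofL (P :: Q :: l)) := by
  have h := red_head hin hout l
  rwa [subst_small hsm] at h

/-- pull the 2nd, 3rd, 4th, 5th element of a list to the front -/
lemma p2 {α} (a b : α) (l : List α) : (a :: b :: l).Perm (b :: a :: l) :=
  List.Perm.swap b a l

lemma p3 {α} (a b c : α) (l : List α) : (a :: b :: c :: l).Perm (c :: a :: b :: l) :=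
  ((p2 b c l).cons a).trans (p2 a c (b :: l))

lemma p4 {α} (a b c d : α) (l : List α) :
    (a :: b :: c :: d :: l).Perm (d :: a :: b :: c :: l) :=
  ((p3 b c d l).cons a).trans (p2 a d (b :: c :: l))

lemma p5 {α} (a b c d e : α) (l : List α) :
    (a :: b :: c :: d :: e :: l).Perm (e :: a :: b :: c :: d :: l) :=
  ((p4 b c d e l).cons a).trans (p2 a e (b :: c :: d :: l))

lemma F5 (A B C D E : Pi) (X : Pi) :
    F (par A (par B (par C (par D E)))) X = F A X + F B X + F C X + F D X + F E X := by
  simp only [F, Pi.add_apply]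
  ring

end Pi

namespace Pi

lemma mk_ne_succ {x0 u v : Nat} {K : Pi} : mkC x0 u v K ≠ succ := by simp [mkC]

lemma mk_ne {x0 u v u' v' : Nat} {K K' : Pi} (h : u ≠ u') :
    mkC x0 u v K ≠ mkC x0 u' v' K' := by simp [mkC, h]

end Pi
open Pi

theorem stmt8 (a b c d e x0 : Nat)
    (hdist : [a, b, c, d, e].Nodup)
    (S1 S2 S3 S4 S5 : Pi)
    (hS1 : S1 = .nil ∨ S1 = .succ) (hS2 : S2 = .nil ∨ S2 = .succ)
    (hS3 : S3 = .nil ∨ S3 = .succ) (hS4 : S4 = .nil ∨ S4 = .succ)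
    (hS5 : S5 = .nil ∨ S5 = .succ) :
    let C1 : Pi := .sum (.outp a a .nil) (.inp b x0 S1)
    let C2 : Pi := .sum (.outp b b .nil) (.inp c x0 S2)
    let C3 : Pi := .sum (.outp c c .nil) (.inp d x0 S3)
    let C4 : Pi := .sum (.outp d d .nil) (.inp e x0 S4)
    let C5 : Pi := .sum (.outp e e .nil) (.inp a x0 S5)
    let S : Pi := .par C1 (.par C2 (.par C3 (.par C4 C5)))
    -- results of the five alternative steps: step i is the communication on
    -- channel i, consuming the component with output ī and the one with input i
    let Ra : Pi := .par .nil (.par C2 (.par C3 (.par C4 S5)))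
    let Rb : Pi := .par S1 (.par .nil (.par C3 (.par C4 C5)))
    let Rc : Pi := .par C1 (.par S2 (.par .nil (.par C4 C5)))
    let Rd : Pi := .par C1 (.par C2 (.par S3 (.par .nil C5)))
    let Re : Pi := .par C1 (.par C2 (.par C3 (.par S4 .nil)))
    -- the five alternative steps exist
    (Red S Ra ∧ Red S Rb ∧ Red S Rc ∧ Red S Rd ∧ Red S Re) ∧
    -- pairwise different results
    (Ra ≠ Rb ∧ Ra ≠ Rc ∧ Ra ≠ Rd ∧ Ra ≠ Re ∧ Rb ≠ Rc ∧ Rb ≠ Rd ∧ Rb ≠ Re ∧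
      Rc ≠ Rd ∧ Rc ≠ Re ∧ Rd ≠ Re) ∧
    -- cyclically adjacent steps are in (symmetric) conflict
    (InConflict Ra Rb ∧ InConflict Rb Rc ∧ InConflict Rc Rd ∧
      InConflict Rd Re ∧ InConflict Re Ra) ∧
    -- all non-adjacent pairs are distributable
    (DistributableSteps S Ra Rc ∧ DistributableSteps S Rb Rd ∧
      DistributableSteps S Rc Re ∧ DistributableSteps S Rd Ra ∧
      DistributableSteps S Re Rb) := by
  intro C1 C2 C3 C4 C5 S Ra Rb Rc Rd Re
  -- pairwise distinct names
  simp only [List.nodup_cons, List.mem_cons, List.mem_singleton, List.not_mem_nil,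
    or_false, not_or, List.nodup_nil, and_true] at hdist
  obtain ⟨⟨hab, hac, had, hae⟩, ⟨hbc, hbd, hbe⟩, ⟨hcd, hce⟩, hde, -⟩ := hdist
  -- explicit descriptions
  have hC1 : C1 = mkC x0 a b S1 := rfl
  have hC2 : C2 = mkC x0 b c S2 := rfl
  have hC3 : C3 = mkC x0 c d S3 := rfl
  have hC4 : C4 = mkC x0 d e S4 := rfl
  have hC5 : C5 = mkC x0 e a S5 := rfl
  have hRa : Ra = .par .nil (.par (mkC x0 b c S2) (.par (mkC x0 c d S3)
      (.par (mkC x0 d e S4) S5))) := rfl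
  have hRb : Rb = .par S1 (.par .nil (.par (mkC x0 c d S3)
      (.par (mkC x0 d e S4) (mkC x0 e a S5)))) := rfl
  have hRc : Rc = .par (mkC x0 a b S1) (.par S2 (.par .nil
      (.par (mkC x0 d e S4) (mkC x0 e a S5)))) := rfl
  have hRd : Rd = .par (mkC x0 a b S1) (.par (mkC x0 b c S2) (.par S3
      (.par .nil (mkC x0 e a S5)))) := rfl
  have hRe : Re = .par (mkC x0 a b S1) (.par (mkC x0 b c S2) (.par (mkC x0 c d S3)
      (.par S4 .nil))) := rfl
  -- selection witnesses
  have selInC1 : Sel C1 (.inp b x0 S1) := Sel.right (Sel.refl _)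
  have selInC2 : Sel C2 (.inp c x0 S2) := Sel.right (Sel.refl _)
  have selInC3 : Sel C3 (.inp d x0 S3) := Sel.right (Sel.refl _)
  have selInC4 : Sel C4 (.inp e x0 S4) := Sel.right (Sel.refl _)
  have selInC5 : Sel C5 (.inp a x0 S5) := Sel.right (Sel.refl _)
  have selOutC1 : Sel C1 (.outp a a .nil) := Sel.left (Sel.refl _)
  have selOutC2 : Sel C2 (.outp b b .nil) := Sel.left (Sel.refl _)
  have selOutC3 : Sel C3 (.outp c c .nil) := Sel.left (Sel.refl _)
  have selOutC4 : Sel C4 (.outp d d .nil) := Sel.left (Sel.refl _)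
  have selOutC5 : Sel C5 (.outp e e .nil) := Sel.left (Sel.refl _)
  -- the five steps
  have redA : Red S Ra :=
    Red.structCong
      (SC.trans (nest5 C1 C2 C3 C4 C5) (sc_perm (p5 C1 C2 C3 C4 C5 [])))
      (red_head' hS5 selInC5 selOutC1 [C2, C3, C4])
      (SC.trans (sc_perm (p5 .nil C2 C3 C4 S5 []).symm)
        (SC.symm (nest5 .nil C2 C3 C4 S5)))
  have redB : Red S Rb :=
    Red.structCong (nest5 C1 C2 C3 C4 C5)
      (red_head' hS1 selInC1 selOutC2 [C3, C4, C5])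
      (SC.symm (nest5 S1 .nil C3 C4 C5))
  have redC : Red S Rc :=
    Red.structCong
      (SC.trans (nest5 C1 C2 C3 C4 C5) (sc_perm (p3 C2 C3 C1 [C4, C5]).symm))
      (red_head' hS2 selInC2 selOutC3 [C1, C4, C5])
      (SC.trans (sc_perm (p3 S2 .nil C1 [C4, C5]))
        (SC.symm (nest5 C1 S2 .nil C4 C5)))
  have redD : Red S Rd :=
    Red.structCong
      (SC.trans (nest5 C1 C2 C3 C4 C5)
        (sc_perm ((p3 C1 C2 C3 [C4, C5]).trans ((p3 C1 C2 C4 [C5]).cons C3))))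
      (red_head' hS3 selInC3 selOutC4 [C1, C2, C5])
      (SC.trans (sc_perm ((p3 C1 C2 S3 [.nil, C5]).trans
          ((p3 C1 C2 .nil [C5]).cons S3)).symm)
        (SC.symm (nest5 C1 C2 S3 .nil C5)))
  have redE : Red S Re :=
    Red.structCong
      (SC.trans (nest5 C1 C2 C3 C4 C5)
        (sc_perm ((p4 C1 C2 C3 C4 [C5]).trans ((p4 C1 C2 C3 C5 []).cons C4))))
      (red_head' hS4 selInC4 selOutC5 [C1, C2, C3])
      (SC.trans (sc_perm ((p4 C1 C2 C3 S4 [.nil]).trans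
          ((p4 C1 C2 C3 .nil []).cons S4)).symm)
        (SC.symm (nest5 C1 C2 C3 S4 .nil)))
  -- F-descriptions of the five results
  have hF_Ra : ∀ X, F Ra X = sing (mkC x0 b c S2) X + sing (mkC x0 c d S3) X
      + sing (mkC x0 d e S4) X + F S5 X := by
    intro X; rw [hRa, F5]; simp only [mkC, F, Pi.zero_apply]; ring
  have hF_Rb : ∀ X, F Rb X = sing (mkC x0 c d S3) X + sing (mkC x0 d e S4) X
      + sing (mkC x0 e a S5) X + F S1 X := by
    intro X; rw [hRb, F5]; simp only [mkC, F, Pi.zero_apply]; ring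
  have hF_Rc : ∀ X, F Rc X = sing (mkC x0 d e S4) X + sing (mkC x0 e a S5) X
      + sing (mkC x0 a b S1) X + F S2 X := by
    intro X; rw [hRc, F5]; simp only [mkC, F, Pi.zero_apply]; ring
  have hF_Rd : ∀ X, F Rd X = sing (mkC x0 e a S5) X + sing (mkC x0 a b S1) X
      + sing (mkC x0 b c S2) X + F S3 X := by
    intro X; rw [hRd, F5]; simp only [mkC, F, Pi.zero_apply]; ring
  have hF_Re : ∀ X, F Re X = sing (mkC x0 a b S1) X + sing (mkC x0 b c S2) X
      + sing (mkC x0 c d S3) X + F S4 X := by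
    intro X; rw [hRe, F5]; simp only [mkC, F, Pi.zero_apply]; ring
  -- conflicts
  have confAB : InConflict Ra Rb := by
    rintro ⟨Q, hQ1, hQ2⟩
    have k1 := key hS2 hS3 hS4 hS5 hbc hbd hbe hcd hce hde hQ1 hF_Ra
    have k2 := key hS3 hS4 hS5 hS1 hcd hce (Ne.symm hac) hde (Ne.symm had) (Ne.symm hae) hQ2 hF_Rb
    rcases k1 with k1 | k1 <;> rcases k2 with k2 | k2
    · exact sing_clash (mk_ne_succ) (mk_ne hde) k1 k2
    · exact sing_clash (mk_ne_succ) (mk_ne (Ne.symm hcd)) k1 k2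
    · exact sing_clash (mk_ne_succ) (mk_ne hbe) k1 k2
    · exact sing_clash (mk_ne_succ) (mk_ne hbc) k1 k2
  have confBC : InConflict Rb Rc := by
    rintro ⟨Q, hQ1, hQ2⟩
    have k1 := key hS3 hS4 hS5 hS1 hcd hce (Ne.symm hac) hde (Ne.symm had) (Ne.symm hae) hQ1 hF_Rb
    have k2 := key hS4 hS5 hS1 hS2 hde (Ne.symm had) (Ne.symm hbd) (Ne.symm hae) (Ne.symm hbe) hab hQ2 hF_Rc
    rcases k1 with k1 | k1 <;> rcases k2 with k2 | k2
    · exact sing_clash (mk_ne_succ) (mk_ne (Ne.symm hae)) k1 k2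
    · exact sing_clash (mk_ne_succ) (mk_ne (Ne.symm hde)) k1 k2
    · exact sing_clash (mk_ne_succ) (mk_ne (Ne.symm hac)) k1 k2
    · exact sing_clash (mk_ne_succ) (mk_ne hcd) k1 k2
  have confCD : InConflict Rc Rd := by
    rintro ⟨Q, hQ1, hQ2⟩
    have k1 := key hS4 hS5 hS1 hS2 hde (Ne.symm had) (Ne.symm hbd) (Ne.symm hae) (Ne.symm hbe) hab hQ1 hF_Rc
    have k2 := key hS5 hS1 hS2 hS3 (Ne.symm hae) (Ne.symm hbe) (Ne.symm hce) hab hac hbc hQ2 hF_Rd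
    rcases k1 with k1 | k1 <;> rcases k2 with k2 | k2
    · exact sing_clash (mk_ne_succ) (mk_ne hab) k1 k2
    · exact sing_clash (mk_ne_succ) (mk_ne hae) k1 k2
    · exact sing_clash (mk_ne_succ) (mk_ne (Ne.symm hbd)) k1 k2
    · exact sing_clash (mk_ne_succ) (mk_ne hde) k1 k2
  have confDE : InConflict Rd Re := by
    rintro ⟨Q, hQ1, hQ2⟩
    have k1 := key hS5 hS1 hS2 hS3 (Ne.symm hae) (Ne.symm hbe) (Ne.symm hce) hab hac hbc hQ1 hF_Rd
    have k2 := key hS1 hS2 hS3 hS4 hab hac had hbc hbd hcd hQ2 hF_Re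
    rcases k1 with k1 | k1 <;> rcases k2 with k2 | k2
    · exact sing_clash (mk_ne_succ) (mk_ne hbc) k1 k2
    · exact sing_clash (mk_ne_succ) (mk_ne (Ne.symm hab)) k1 k2
    · exact sing_clash (mk_ne_succ) (mk_ne (Ne.symm hce)) k1 k2
    · exact sing_clash (mk_ne_succ) (mk_ne (Ne.symm hae)) k1 k2
  have confEA : InConflict Re Ra := by
    rintro ⟨Q, hQ1, hQ2⟩
    have k1 := key hS1 hS2 hS3 hS4 hab hac had hbc hbd hcd hQ1 hF_Re
    have k2 := key hS2 hS3 hS4 hS5 hbc hbd hbe hcd hce hde hQ2 hF_Ra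
    rcases k1 with k1 | k1 <;> rcases k2 with k2 | k2
    · exact sing_clash (mk_ne_succ) (mk_ne hcd) k1 k2
    · exact sing_clash (mk_ne_succ) (mk_ne (Ne.symm hbc)) k1 k2
    · exact sing_clash (mk_ne_succ) (mk_ne had) k1 k2
    · exact sing_clash (mk_ne_succ) (mk_ne hab) k1 k2
  -- distributability
  have distAC : DistributableSteps S Ra Rc := by
    refine ⟨ofL [C5, C1, C4], ofL [C2, C3], ofL [S5, .nil, C4], ofL [S2, .nil],
      ?_, red_head' hS5 selInC5 selOutC1 [C4], red_head' hS2 selInC2 selOutC3 [],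
      ?_, ?_⟩
    · exact SC.trans (nest5 C1 C2 C3 C4 C5)
        (SC.trans (sc_perm ((p5 C1 C2 C3 C4 C5 []).trans
          (((p3 C2 C3 C4 []).cons C1).cons C5)))
          (sc_append [C5, C1, C4] [C2, C3]))
    · exact SC.trans (nest5 .nil C2 C3 C4 S5)
        (SC.trans (sc_perm ((p5 .nil C2 C3 C4 S5 []).trans
          (((p3 C2 C3 C4 []).cons .nil).cons S5)))
          (sc_append [S5, .nil, C4] [C2, C3]))
    · exact SC.trans (nest5 C1 S2 .nil C4 C5)
        (SC.trans (sc_perm ((p5 C1 S2 .nil C4 C5 []).trans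
          (((p3 S2 .nil C4 []).cons C1).cons C5)))
          (sc_append [C5, C1, C4] [S2, .nil]))
  have distBD : DistributableSteps S Rb Rd := by
    refine ⟨ofL [C1, C2, C5], ofL [C3, C4], ofL [S1, .nil, C5], ofL [S3, .nil],
      ?_, red_head' hS1 selInC1 selOutC2 [C5], red_head' hS3 selInC3 selOutC4 [],
      ?_, ?_⟩
    · exact SC.trans (nest5 C1 C2 C3 C4 C5)
        (SC.trans (sc_perm (((p3 C3 C4 C5 []).cons C2).cons C1))
          (sc_append [C1, C2, C5] [C3, C4]))
    · exact SC.trans (nest5 S1 .nil C3 C4 C5)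
        (SC.trans (sc_perm (((p3 C3 C4 C5 []).cons .nil).cons S1))
          (sc_append [S1, .nil, C5] [C3, C4]))
    · exact SC.trans (nest5 C1 C2 S3 .nil C5)
        (SC.trans (sc_perm (((p3 S3 .nil C5 []).cons C2).cons C1))
          (sc_append [C1, C2, C5] [S3, .nil]))
  have distCE : DistributableSteps S Rc Re := by
    refine ⟨ofL [C2, C3, C1], ofL [C4, C5], ofL [S2, .nil, C1], ofL [S4, .nil],
      ?_, red_head' hS2 selInC2 selOutC3 [C1], red_head' hS4 selInC4 selOutC5 [],
      ?_, ?_⟩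
    · exact SC.trans (nest5 C1 C2 C3 C4 C5)
        (SC.trans (sc_perm (p3 C2 C3 C1 [C4, C5]).symm)
          (sc_append [C2, C3, C1] [C4, C5]))
    · exact SC.trans (nest5 C1 S2 .nil C4 C5)
        (SC.trans (sc_perm (p3 S2 .nil C1 [C4, C5]).symm)
          (sc_append [S2, .nil, C1] [C4, C5]))
    · exact SC.trans (nest5 C1 C2 C3 S4 .nil)
        (SC.trans (sc_perm (p3 C2 C3 C1 [S4, .nil]).symm)
          (sc_append [C2, C3, C1] [S4, .nil]))
  have distDA : DistributableSteps S Rd Ra := by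
    refine ⟨ofL [C3, C4, C2], ofL [C5, C1], ofL [S3, .nil, C2], ofL [S5, .nil],
      ?_, red_head' hS3 selInC3 selOutC4 [C2], red_head' hS5 selInC5 selOutC1 [],
      ?_, ?_⟩
    · exact SC.trans (nest5 C1 C2 C3 C4 C5)
        (SC.trans (sc_perm ((p3 C1 C2 C3 [C4, C5]).trans
          (((p3 C1 C2 C4 [C5]).cons C3).trans
            ((((p2 C1 C2 [C5]).trans ((p2 C1 C5 []).cons C2)).cons C4).cons C3))))
          (sc_append [C3, C4, C2] [C5, C1]))
    · exact SC.trans (nest5 C1 C2 S3 .nil C5)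
        (SC.trans (sc_perm ((p3 C1 C2 S3 [.nil, C5]).trans
          (((p3 C1 C2 .nil [C5]).cons S3).trans
            ((((p2 C1 C2 [C5]).trans ((p2 C1 C5 []).cons C2)).cons .nil).cons S3))))
          (sc_append [S3, .nil, C2] [C5, C1]))
    · exact SC.trans (nest5 .nil C2 C3 C4 S5)
        (SC.trans (sc_perm ((p3 .nil C2 C3 [C4, S5]).trans
          (((p3 .nil C2 C4 [S5]).cons C3).trans
            ((((p2 .nil C2 [S5]).trans ((p2 .nil S5 []).cons C2)).cons C4).cons C3))))
          (sc_append [C3, C4, C2] [S5, .nil]))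
  have distEB : DistributableSteps S Re Rb := by
    refine ⟨ofL [C4, C5, C3], ofL [C1, C2], ofL [S4, .nil, C3], ofL [S1, .nil],
      ?_, red_head' hS4 selInC4 selOutC5 [C3], red_head' hS1 selInC1 selOutC2 [],
      ?_, ?_⟩
    · exact SC.trans (nest5 C1 C2 C3 C4 C5)
        (SC.trans (sc_perm ((p4 C1 C2 C3 C4 [C5]).trans
          (((p4 C1 C2 C3 C5 []).cons C4).trans
            (((p3 C1 C2 C3 []).cons C5).cons C4))))
          (sc_append [C4, C5, C3] [C1, C2]))
    · exact SC.trans (nest5 C1 C2 C3 S4 .nil)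
        (SC.trans (sc_perm ((p4 C1 C2 C3 S4 [.nil]).trans
          (((p4 C1 C2 C3 .nil []).cons S4).trans
            (((p3 C1 C2 C3 []).cons .nil).cons S4))))
          (sc_append [S4, .nil, C3] [C1, C2]))
    · exact SC.trans (nest5 S1 .nil C3 C4 C5)
        (SC.trans (sc_perm ((p4 S1 .nil C3 C4 [C5]).trans
          (((p4 S1 .nil C3 C5 []).cons C4).trans
            (((p3 S1 .nil C3 []).cons C5).cons C4))))
          (sc_append [C4, C5, C3] [S1, .nil]))
  refine ⟨⟨redA, redB, redC, redD, redE⟩, ⟨?_, ?_, ?_, ?_, ?_, ?_, ?_, ?_, ?_, ?_⟩,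
    ⟨confAB, confBC, confCD, confDE, confEA⟩,
    ⟨distAC, distBD, distCE, distDA, distEB⟩⟩
  · rw [hRa, hRb]; simp [mkC]
  · rw [hRa, hRc]; simp [mkC]
  · rw [hRa, hRd]; simp [mkC]
  · rw [hRa, hRe]; simp [mkC]
  · rcases hS1 with h | h <;> rw [hRb, hRc, h] <;> simp [mkC]
  · rw [hRb, hRd]; simp [mkC]
  · rw [hRb, hRe]; simp [mkC]
  · rcases hS2 with h | h <;> rw [hRc, hRd, h] <;> simp [mkC]
  · rcases hS2 with h | h <;> rw [hRc, hRe, h] <;> simp [mkC]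
  · rcases hS3 with h | h <;> rw [hRd, hRe, h] <;> simp [mkC]
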